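/- The sum 4·∑_{n=1}^∞ (-1)ⁿ/(2n-1)² is nonzero (it equals -4 times Catalan's constant). -/

import Mathlib

/-! The series is minus Catalan's constant `G = ∑ (-1)ⁿ/(2n+1)²`. Since the terms `1/(2n+1)²`
decrease, the alternating series test bounds `G` below by its second partial sum `1 - 1/9`. -/

open Finset

theorem Antitone.sub_le_tsum_alternating {E : Type*} [Ring E] [PartialOrder E] [IsOrderedRing E]
    [UniformSpace E] [IsUniformAddGroup E] [CompleteSpace E] [OrderClosedTopology E]
    {f : ℕ → E} (hfa : Antitone f) (hfs : Summable f) :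
    f 0 - f 1 ≤ ∑' n, (-1) ^ n * f n := by
  simpa [sum_range_succ, sub_eq_add_neg] using
    hfa.alternating_series_le_tendsto hfs.tendsto_alternating_series_tsum 1

theorem summable_one_div_two_mul_add_one_sq :
    Summable fun n : ℕ => 1 / (2 * (n : ℝ) + 1) ^ 2 := by
  have h := (Real.summable_one_div_nat_pow (p := 2)).2 one_lt_two
  exact_mod_cast h.comp_injective (i := fun n : ℕ => 2 * n + 1) fun a b hab => by simpa using hab

theorem antitone_one_div_two_mul_add_one_sq :
    Antitone fun n : ℕ => 1 / (2 * (n : ℝ) + 1) ^ 2 := fun m n hmn => by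
  dsimp only
  gcongr

/-- The commutator sum `4 ∑_{n=1}^∞ (-1)ⁿ/(2n-1)²` is nonzero. -/
theorem commutator_sum_ne_zero :
    4 * ∑' n : ℕ, ((-1 : ℝ)) ^ (n + 1) / (2 * (n : ℝ) + 1) ^ 2 ≠ 0 := by
  have hcatalan_pos : 0 < ∑' n : ℕ, (-1 : ℝ) ^ n * (1 / (2 * (n : ℝ) + 1) ^ 2) :=
    lt_of_lt_of_le (by norm_num)
      (antitone_one_div_two_mul_add_one_sq.sub_le_tsum_alternating
        summable_one_div_two_mul_add_one_sq)
  have hneg : ∑' n : ℕ, ((-1 : ℝ)) ^ (n + 1) / (2 * (n : ℝ) + 1) ^ 2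
      = -∑' n : ℕ, (-1 : ℝ) ^ n * (1 / (2 * (n : ℝ) + 1) ^ 2) := by
    rw [← tsum_neg]
    congr 1 with n
    ring
  rw [hneg]
  exact mul_ne_zero four_ne_zero (neg_ne_zero.2 hcatalan_pos.ne')
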